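/- Define b(u) = 2A(u)ᵀ Λ A(u) u, where Λ is the 4×4 matrix with Λ12 = −1, Λ21 = 1 and all other entries zero, and A(u) is the KS matrix. Then l(u, b(u)) = 0 identically, where l(u,v) = u4v1 − u3v2 + u2v3 − u1v4; equivalently Ωu · b(u) = 0 with Ω the matrix with rows (0,0,0,1), (0,0,−1,0), (0,1,0,0), (−1,0,0,0). -/
import Mathlib

open Matrix

noncomputable def ksA (u : Fin 4 → ℝ) : Matrix (Fin 4) (Fin 4) ℝ :=
  !![u 0, -u 1, -u 2, u 3;
     u 1, u 0, -u 3, -u 2;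
     u 2, u 3, u 0, u 1;
     u 3, -u 2, u 1, -u 0]

noncomputable def ksLambda : Matrix (Fin 4) (Fin 4) ℝ :=
  !![0, -1, 0, 0;
     1, 0, 0, 0;
     0, 0, 0, 0;
     0, 0, 0, 0]

noncomputable def ksOmega : Matrix (Fin 4) (Fin 4) ℝ :=
  !![0, 0, 0, 1;
     0, 0, -1, 0;
     0, 1, 0, 0;
     -1, 0, 0, 0]

/-- `b(u) = 2A(u)ᵀΛA(u)u`. -/
noncomputable def ksb (u : Fin 4 → ℝ) : Fin 4 → ℝ :=
  (2 : ℝ) • ((ksA u)ᵀ.mulVec (ksLambda.mulVec ((ksA u).mulVec u)))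

/-- KS bilinear form. -/
noncomputable def ksL (u v : Fin 4 → ℝ) : ℝ :=
  u 3 * v 0 - u 2 * v 1 + u 1 * v 2 - u 0 * v 3

theorem ksL_b_eq_zero (u : Fin 4 → ℝ) :
    ksL u (ksb u) = 0 ∧ (ksOmega.mulVec u) ⬝ᵥ ksb u = 0 := by
  constructor <;>
  · simp [ksL, ksb, ksA, ksLambda, ksOmega, mulVec, dotProduct, Fin.sum_univ_four,
        Matrix.transpose_apply, Matrix.cons_val', Matrix.cons_val_zero, Matrix.cons_val_one,
        Matrix.head_cons, Matrix.empty_val', Matrix.cons_val_fin_one, Matrix.head_fin_const, Matrix.vecHead, Matrix.vecTail]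
    ring
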